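/- Fix r₁ > 0 and l ∈ ℤ. For l ≠ 0 let F_l be the space of functions u on ℝ² ∖ {0} of the form u(r cos θ, r sin θ) = r^l (a cos(|l|θ) + b sin(|l|θ)) with a, b ∈ ℂ, and let F₀ be the space of functions of the form u(r cos θ, r sin θ) = c₀ + c₁ log r with c₀, c₁ ∈ ℂ. If u ∈ F_l satisfies 𝔹_{r₁}(u, v) = 0 for every v ∈ F_{−l}, then u = 0. -/

import Mathlib

open MeasureTheory

/-- The point of `ℝ²` with polar coordinates `(r, θ)`. -/
noncomputable def pt (r θ : ℝ) : EuclideanSpace ℝ (Fin 2) :=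
  (EuclideanSpace.equiv (Fin 2) ℝ).symm ![r * Real.cos θ, r * Real.sin θ]

/-- The boundary pairing
`𝔹_{r₁}(u,v) = ∫_{‖x‖=r₁} (u ∂_r v̄ - (∂_r u) v̄)`, written in polar coordinates. -/
noncomputable def bdryPair (r₁ : ℝ) (u v : EuclideanSpace ℝ (Fin 2) → ℂ) : ℂ :=
  ∫ θ in (0 : ℝ)..(2 * Real.pi),
    (u (pt r₁ θ) * (starRingEnd ℂ) (deriv (fun s => v (pt s θ)) r₁)
      - deriv (fun s => u (pt s θ)) r₁ * (starRingEnd ℂ) (v (pt r₁ θ))) * (r₁ : ℂ)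

/-- Membership in the space `F_l` of pure-mode harmonic functions on `ℝ² ∖ {0}`:
for `l ≠ 0`, functions `r^l (a cos(|l|θ) + b sin(|l|θ))`; for `l = 0`, functions
`c₀ + c₁ log r`. -/
def memF (l : ℤ) (u : EuclideanSpace ℝ (Fin 2) → ℂ) : Prop :=
  if l = 0 then
    ∃ c₀ c₁ : ℂ, ∀ r : ℝ, 0 < r → ∀ θ : ℝ,
      u (pt r θ) = c₀ + c₁ * ((Real.log r : ℝ) : ℂ)
  else
    ∃ a b : ℂ, ∀ r : ℝ, 0 < r → ∀ θ : ℝ,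
      u (pt r θ) = ((r ^ l : ℝ) : ℂ) *
        (a * ((Real.cos ((l.natAbs : ℝ) * θ) : ℝ) : ℂ)
          + b * ((Real.sin ((l.natAbs : ℝ) * θ) : ℝ) : ℂ))

namespace BPaux

open Real intervalIntegral Complex

lemma sin2pin (n : ℕ) : Real.sin ((n:ℝ) * (2*π)) = 0 := by
  have := Real.sin_add_int_mul_two_pi 0 (n:ℤ)
  simpa using this

lemma int_cos_sq (n : ℕ) (hn : n ≠ 0) :
    ∫ θ in (0:ℝ)..(2*π), Real.cos ((n:ℝ)*θ)^2 = π := by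
  rw [integral_comp_mul_left (fun x => Real.cos x ^ 2) (by exact_mod_cast hn)]
  rw [integral_cos_sq, sin2pin n]
  field_simp
  simp
  have : (n:ℝ) ≠ 0 := by exact_mod_cast hn
  field_simp

lemma int_sin_sq (n : ℕ) (hn : n ≠ 0) :
    ∫ θ in (0:ℝ)..(2*π), Real.sin ((n:ℝ)*θ)^2 = π := by
  rw [integral_comp_mul_left (fun x => Real.sin x ^ 2) (by exact_mod_cast hn)]
  rw [integral_sin_sq, sin2pin n]
  field_simp
  simp
  have : (n:ℝ) ≠ 0 := by exact_mod_cast hn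
  field_simp

lemma int_sin_cos (n : ℕ) (hn : n ≠ 0) :
    ∫ θ in (0:ℝ)..(2*π), Real.sin ((n:ℝ)*θ) * Real.cos ((n:ℝ)*θ) = 0 := by
  rw [integral_comp_mul_left (fun x => Real.sin x * Real.cos x) (by exact_mod_cast hn)]
  rw [integral_sin_mul_cos₁, sin2pin n]
  simp

lemma pt_apply0 (r θ : ℝ) : pt r θ 0 = r * Real.cos θ := rfl
lemma pt_apply1 (r θ : ℝ) : pt r θ 1 = r * Real.sin θ := rfl

noncomputable def zc (x : EuclideanSpace ℝ (Fin 2)) : ℂ := Complex.mk (x 0) (x 1)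

lemma zc_pt (r θ : ℝ) : zc (pt r θ) = (r:ℂ) * Complex.exp (θ * Complex.I) := by
  rw [Complex.exp_mul_I]
  apply Complex.ext
  · simp [zc, pt_apply0, Complex.cos_ofReal_re]
  · simp [zc, pt_apply1, Complex.sin_ofReal_re]

lemma abs_zc_pt (r θ : ℝ) (hr : 0 < r) : ‖zc (pt r θ)‖ = r := by
  rw [zc_pt]
  simp [Complex.norm_exp, abs_of_pos hr]

lemma zc_ne (x : EuclideanSpace ℝ (Fin 2)) (hx : x ≠ 0) : zc x ≠ 0 := by
  intro h
  apply hx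
  have h0 : x 0 = 0 := by simpa [zc] using congrArg Complex.re h
  have h1 : x 1 = 0 := by simpa [zc] using congrArg Complex.im h
  ext i
  fin_cases i <;> simpa

lemma exists_polar (x : EuclideanSpace ℝ (Fin 2)) (hx : x ≠ 0) :
    ∃ r θ : ℝ, 0 < r ∧ x = pt r θ := by
  have hz := zc_ne x hx
  refine ⟨‖zc x‖, Complex.arg (zc x), by simpa using (norm_pos_iff.mpr hz), ?_⟩
  ext i
  fin_cases i
  · show x 0 = pt _ _ 0
    rw [pt_apply0, Complex.norm_mul_cos_arg]
    rfl
  · show x 1 = pt _ _ 1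
    rw [pt_apply1, Complex.norm_mul_sin_arg]
    rfl

lemma arg_pt (r θ : ℝ) (hr : 0 < r) :
    ∃ k : ℤ, Complex.arg (zc (pt r θ)) = θ + k * (2 * π) := by
  have h1 : zc (pt r θ) = (r:ℂ) * Complex.exp (θ * Complex.I) := zc_pt r θ
  have habs : ‖zc (pt r θ)‖ = r := abs_zc_pt r θ hr
  have h2 : Complex.exp ((Complex.arg (zc (pt r θ)) : ℂ) * Complex.I) =
      Complex.exp ((θ:ℂ) * Complex.I) := by
    have h3 := Complex.norm_mul_exp_arg_mul_I (zc (pt r θ))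
    rw [habs] at h3; nth_rewrite 2 [h1] at h3
    have hr' : (r:ℂ) ≠ 0 := Complex.ofReal_ne_zero.mpr hr.ne'
    exact mul_left_cancel₀ hr' h3
  obtain ⟨n, hn⟩ := Complex.exp_eq_exp_iff_exists_int.mp h2
  refine ⟨n, ?_⟩
  have := congrArg Complex.im hn
  simpa [Complex.mul_I_im] using this

lemma trig_pt (n : ℕ) (r θ : ℝ) (hr : 0 < r) :
    Real.cos ((n:ℝ) * Complex.arg (zc (pt r θ))) = Real.cos ((n:ℝ) * θ) ∧
    Real.sin ((n:ℝ) * Complex.arg (zc (pt r θ))) = Real.sin ((n:ℝ) * θ) := by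
  obtain ⟨k, hk⟩ := arg_pt r θ hr
  rw [hk]
  have h : (n:ℝ) * (θ + k * (2 * π)) = (n:ℝ) * θ + ((n * k : ℤ) : ℝ) * (2 * π) := by
    push_cast; ring
  rw [h, Real.cos_add_int_mul_two_pi, Real.sin_add_int_mul_two_pi]
  exact ⟨rfl, rfl⟩

/-- Compute the derivative along a ray from values on the ray. -/
lemma deriv_on_ray {w : EuclideanSpace ℝ (Fin 2) → ℂ} {g : ℝ → ℂ} {g' : ℂ}
    {r₁ : ℝ} (hr₁ : 0 < r₁) (θ : ℝ)
    (hw : ∀ s : ℝ, 0 < s → w (pt s θ) = g s) (hg : HasDerivAt g g' r₁) :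
    deriv (fun s => w (pt s θ)) r₁ = g' := by
  have hev : (fun s => w (pt s θ)) =ᶠ[nhds r₁] g :=
    Filter.eventuallyEq_of_mem (Ioi_mem_nhds hr₁) (fun s hs => hw s hs)
  rw [hev.deriv_eq, hg.deriv]

lemma bdryPair_eq (r₁ : ℝ) (u v : EuclideanSpace ℝ (Fin 2) → ℂ) (f : ℝ → ℂ)
    (h : ∀ θ : ℝ,
      (u (pt r₁ θ) * (starRingEnd ℂ) (deriv (fun s => v (pt s θ)) r₁)
        - deriv (fun s => u (pt s θ)) r₁ * (starRingEnd ℂ) (v (pt r₁ θ))) * (r₁ : ℂ) = f θ) :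
    bdryPair r₁ u v = ∫ θ in (0:ℝ)..(2*π), f θ :=
  intervalIntegral.integral_congr (fun θ _ => h θ)

lemma ring_key (A B C D R e f L : ℂ) (h1 : A*B*R = 1) (h2 : C*D*R = 1) :
    ((A*e) * ((-L*B)*f) - ((L*C)*e)*(D*f)) * R = (-2*L)*(e*f) := by
  linear_combination (-L*e*f)*h1 + (-L*e*f)*h2

end BPaux

open BPaux Real Complex in
/-- Nondegeneracy of the boundary pairing `𝔹_{r₁} : F_l × F_{-l} → ℂ`: if `u ∈ F_l`
pairs to zero with every `v ∈ F_{-l}`, then `u` vanishes on `ℝ² ∖ {0}`. -/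
theorem boundary_pairing_nondegenerate (r₁ : ℝ) (hr₁ : 0 < r₁) (l : ℤ)
    (u : EuclideanSpace ℝ (Fin 2) → ℂ) (hu : memF l u)
    (hpair : ∀ v : EuclideanSpace ℝ (Fin 2) → ℂ, memF (-l) v → bdryPair r₁ u v = 0) :
    ∀ x : EuclideanSpace ℝ (Fin 2), x ≠ 0 → u x = 0 := by
  have hπ : (π : ℝ) ≠ 0 := Real.pi_ne_zero
  by_cases hl : l = 0
  · -- l = 0
    subst hl
    rw [memF, if_pos rfl] at hu
    obtain ⟨c₀, c₁, hu⟩ := hu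
    -- first test function : constant 1
    have h1 : c₁ = 0 := by
      have hmem : memF (-0) (fun _ => (1:ℂ)) := by
        rw [neg_zero, memF, if_pos rfl]
        exact ⟨1, 0, fun r hr θ => by simp⟩
      have hp := hpair _ hmem
      have heq : bdryPair r₁ u (fun _ => (1:ℂ)) = ∫ _ in (0:ℝ)..(2*π), (-c₁) := by
        apply bdryPair_eq
        intro θ
        have hdu : deriv (fun s => u (pt s θ)) r₁ = c₁ * (r₁⁻¹ : ℝ) := by
          apply deriv_on_ray hr₁ θ (fun s hs => hu s hs θ)
          exact (((Real.hasDerivAt_log hr₁.ne').ofReal_comp).const_mul c₁).const_add c₀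
        have hdv : deriv (fun s => (fun _ : EuclideanSpace ℝ (Fin 2) => (1:ℂ)) (pt s θ)) r₁ = 0 := by
          simp
        rw [hdu, hdv, hu r₁ hr₁ θ]
        have hr' : (r₁ : ℂ) ≠ 0 := Complex.ofReal_ne_zero.mpr hr₁.ne'
        have : ((r₁⁻¹ : ℝ) : ℂ) * (r₁ : ℂ) = 1 := by
          push_cast
          exact inv_mul_cancel₀ hr'
        simp only [map_zero, mul_zero, map_one, mul_one, zero_sub]
        linear_combination (-c₁) * this
      rw [heq, intervalIntegral.integral_const] at hp
      have h2π : (2*π - 0) ≠ 0 := by simp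
      have : ((2*π - 0 : ℝ) : ℂ) * (-c₁) = 0 := by
        rw [← hp]; simp [smul_eq_mul]
      rcases mul_eq_zero.mp this with h | h
      · exact absurd (by exact_mod_cast h) h2π
      · exact neg_eq_zero.mp h
    subst h1
    -- second test function : log r
    have h0 : c₀ = 0 := by
      have hmem : memF (-0) (fun x => ((Real.log ‖zc x‖ : ℝ) : ℂ)) := by
        rw [neg_zero, memF, if_pos rfl]
        exact ⟨0, 1, fun r hr θ => by rw [abs_zc_pt r θ hr]; simp⟩
      have hp := hpair _ hmem
      have heq : bdryPair r₁ u (fun x => ((Real.log ‖zc x‖ : ℝ) : ℂ))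
          = ∫ _ in (0:ℝ)..(2*π), c₀ := by
        apply bdryPair_eq
        intro θ
        have hdu : deriv (fun s => u (pt s θ)) r₁ = 0 * (r₁⁻¹ : ℝ) := by
          apply deriv_on_ray hr₁ θ (fun s hs => hu s hs θ)
          exact (((Real.hasDerivAt_log hr₁.ne').ofReal_comp).const_mul 0).const_add c₀
        have hdv : deriv (fun s =>
            (fun x => ((Real.log ‖zc x‖ : ℝ) : ℂ)) (pt s θ)) r₁
            = ((r₁⁻¹ : ℝ) : ℂ) :=
          deriv_on_ray (w := fun x => ((Real.log ‖zc x‖ : ℝ) : ℂ))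
            (g := fun s => ((Real.log s : ℝ) : ℂ)) hr₁ θ
            (fun s hs => by simp only [abs_zc_pt s θ hs])
            ((Real.hasDerivAt_log hr₁.ne').ofReal_comp)
        rw [hdu, hdv, hu r₁ hr₁ θ]
        have hr' : (r₁ : ℂ) ≠ 0 := Complex.ofReal_ne_zero.mpr hr₁.ne'
        have hinv : ((r₁⁻¹ : ℝ) : ℂ) * (r₁ : ℂ) = 1 := by
          push_cast
          exact inv_mul_cancel₀ hr'
        simp only [zero_mul, mul_zero, zero_sub, sub_zero, zero_add, Complex.conj_ofReal]
        linear_combination c₀ * hinv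
      rw [heq, intervalIntegral.integral_const] at hp
      have h2π : (2*π - 0) ≠ 0 := by simp
      have : ((2*π - 0 : ℝ) : ℂ) * c₀ = 0 := by
        rw [← hp]; simp [smul_eq_mul]
      rcases mul_eq_zero.mp this with h | h
      · exact absurd (by exact_mod_cast h) h2π
      · exact h
    intro x hx
    obtain ⟨r, θ, hr, rfl⟩ := exists_polar x hx
    rw [hu r hr θ, h0]
    simp
  · -- l ≠ 0
    rw [memF, if_neg hl] at hu
    obtain ⟨a, b, hu⟩ := hu
    set n : ℕ := l.natAbs with hn_def
    have hn : n ≠ 0 := Int.natAbs_ne_zero.mpr hl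
    have hrne : r₁ ≠ 0 := hr₁.ne'
    have hr' : (r₁ : ℂ) ≠ 0 := Complex.ofReal_ne_zero.mpr hrne
    have key : ∀ a' b' : ℂ,
        (-2*(l:ℂ)) * ((a * (starRingEnd ℂ) a') * (π:ℂ) + (b * (starRingEnd ℂ) b') * (π:ℂ)) = 0 := by
      intro a' b'
      set v : EuclideanSpace ℝ (Fin 2) → ℂ := fun x =>
        ((‖zc x‖ ^ (-l) : ℝ) : ℂ) *
          (a' * ((Real.cos ((n:ℝ) * Complex.arg (zc x)) : ℝ) : ℂ)
            + b' * ((Real.sin ((n:ℝ) * Complex.arg (zc x)) : ℝ) : ℂ)) with hv_def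
      have hv : ∀ r : ℝ, 0 < r → ∀ θ : ℝ, v (pt r θ) =
          ((r ^ (-l) : ℝ) : ℂ) * (a' * ((Real.cos ((n:ℝ) * θ) : ℝ) : ℂ)
            + b' * ((Real.sin ((n:ℝ) * θ) : ℝ) : ℂ)) := by
        intro r hr θ
        rw [hv_def]
        simp only
        rw [abs_zc_pt r θ hr, (trig_pt n r θ hr).1, (trig_pt n r θ hr).2]
      have hmem : memF (-l) v := by
        rw [memF, if_neg (neg_ne_zero.mpr hl)]
        refine ⟨a', b', fun r hr θ => ?_⟩
        rw [Int.natAbs_neg, ← hn_def]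
        exact hv r hr θ
      have hp := hpair v hmem
      have h1r : r₁ ^ l * r₁ ^ (-l-1) * r₁ = 1 := by
        rw [← zpow_add₀ hrne]
        have h : l + (-l-1) = -1 := by ring
        rw [h, zpow_neg_one, inv_mul_cancel₀ hrne]
      have h2r : r₁ ^ (l-1) * r₁ ^ (-l) * r₁ = 1 := by
        rw [← zpow_add₀ hrne]
        have h : (l-1) + (-l) = -1 := by ring
        rw [h, zpow_neg_one, inv_mul_cancel₀ hrne]
      have h1 : ((r₁ ^ l : ℝ) : ℂ) * ((r₁ ^ (-l-1) : ℝ) : ℂ) * (r₁ : ℂ) = 1 := by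
        exact_mod_cast congrArg (fun t : ℝ => (t : ℂ)) h1r
      have h2 : ((r₁ ^ (l-1) : ℝ) : ℂ) * ((r₁ ^ (-l) : ℝ) : ℂ) * (r₁ : ℂ) = 1 := by
        exact_mod_cast congrArg (fun t : ℝ => (t : ℂ)) h2r
      have heq : bdryPair r₁ u v = ∫ θ in (0:ℝ)..(2*π),
          ((-2*(l:ℂ)) * ((a * (starRingEnd ℂ) a') * ((Real.cos ((n:ℝ)*θ)^2 : ℝ) : ℂ)
            + (b * (starRingEnd ℂ) b') * ((Real.sin ((n:ℝ)*θ)^2 : ℝ) : ℂ)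
            + (a * (starRingEnd ℂ) b' + b * (starRingEnd ℂ) a')
              * ((Real.sin ((n:ℝ)*θ) * Real.cos ((n:ℝ)*θ) : ℝ) : ℂ))) := by
        apply bdryPair_eq
        intro θ
        have hdu : deriv (fun s => u (pt s θ)) r₁
            = (((l:ℝ) * r₁ ^ (l-1) : ℝ) : ℂ)
              * (a * ((Real.cos ((n:ℝ) * θ) : ℝ) : ℂ) + b * ((Real.sin ((n:ℝ) * θ) : ℝ) : ℂ)) := by
          apply deriv_on_ray hr₁ θ (fun s hs => hu s hs θ)
          exact ((hasDerivAt_zpow l r₁ (Or.inl hrne)).ofReal_comp).mul_const _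
        have hdv : deriv (fun s => v (pt s θ)) r₁
            = ((((-l : ℤ):ℝ) * r₁ ^ (-l-1) : ℝ) : ℂ)
              * (a' * ((Real.cos ((n:ℝ) * θ) : ℝ) : ℂ) + b' * ((Real.sin ((n:ℝ) * θ) : ℝ) : ℂ)) := by
          apply deriv_on_ray hr₁ θ (fun s hs => hv s hs θ)
          exact ((hasDerivAt_zpow (-l) r₁ (Or.inl hrne)).ofReal_comp).mul_const _
        rw [hdu, hdv, hu r₁ hr₁ θ, hv r₁ hr₁ θ]
        simp only [map_mul, map_add, Complex.conj_ofReal, Complex.ofReal_mul,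
          Complex.ofReal_pow, Complex.ofReal_intCast, Int.cast_neg, Complex.ofReal_neg, map_neg, map_intCast]
        linear_combination
          ((-(l:ℂ)) * ((a * ((Real.cos ((n:ℝ)*θ) : ℝ) : ℂ) + b * ((Real.sin ((n:ℝ)*θ) : ℝ) : ℂ))
            * ((starRingEnd ℂ) a' * ((Real.cos ((n:ℝ)*θ) : ℝ) : ℂ)
              + (starRingEnd ℂ) b' * ((Real.sin ((n:ℝ)*θ) : ℝ) : ℂ)))) * h1
          + ((-(l:ℂ)) * ((a * ((Real.cos ((n:ℝ)*θ) : ℝ) : ℂ) + b * ((Real.sin ((n:ℝ)*θ) : ℝ) : ℂ))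
            * ((starRingEnd ℂ) a' * ((Real.cos ((n:ℝ)*θ) : ℝ) : ℂ)
              + (starRingEnd ℂ) b' * ((Real.sin ((n:ℝ)*θ) : ℝ) : ℂ)))) * h2
      rw [heq] at hp
      have c1 : Continuous fun θ:ℝ => ((Real.cos ((n:ℝ)*θ)^2 : ℝ) : ℂ) := by fun_prop
      have c2 : Continuous fun θ:ℝ => ((Real.sin ((n:ℝ)*θ)^2 : ℝ) : ℂ) := by fun_prop
      have c3 : Continuous fun θ:ℝ => ((Real.sin ((n:ℝ)*θ) * Real.cos ((n:ℝ)*θ) : ℝ) : ℂ) := by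
        fun_prop
      rw [intervalIntegral.integral_const_mul] at hp
      rw [intervalIntegral.integral_add
          (((continuous_const.fun_mul c1).fun_add (continuous_const.fun_mul c2)).intervalIntegrable _ _)
          ((continuous_const.fun_mul c3).intervalIntegrable _ _)] at hp
      rw [intervalIntegral.integral_add
          ((continuous_const.fun_mul c1).intervalIntegrable _ _)
          ((continuous_const.fun_mul c2).intervalIntegrable _ _)] at hp
      rw [intervalIntegral.integral_const_mul, intervalIntegral.integral_const_mul,
        intervalIntegral.integral_const_mul, intervalIntegral.integral_ofReal,
        intervalIntegral.integral_ofReal, intervalIntegral.integral_ofReal,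
        int_cos_sq n hn, int_sin_sq n hn, int_sin_cos n hn] at hp
      simpa using hp
    have hl' : (-2*(l:ℂ)) ≠ 0 := by
      simp only [ne_eq, mul_eq_zero, neg_eq_zero]
      push_neg
      exact ⟨by norm_num, Int.cast_ne_zero.mpr hl⟩
    have hπ' : ((π:ℝ) : ℂ) ≠ 0 := Complex.ofReal_ne_zero.mpr hπ
    have ha : a = 0 := by
      have := key 1 0
      simp only [map_one, map_zero, mul_one, mul_zero, zero_mul, add_zero] at this
      rcases mul_eq_zero.mp this with h | h
      · exact absurd h hl'
      · rcases mul_eq_zero.mp h with h' | h'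
        · exact h'
        · exact absurd h' hπ'
    have hb : b = 0 := by
      have := key 0 1
      simp only [map_one, map_zero, mul_one, mul_zero, zero_mul, zero_add] at this
      rcases mul_eq_zero.mp this with h | h
      · exact absurd h hl'
      · rcases mul_eq_zero.mp h with h' | h'
        · exact h'
        · exact absurd h' hπ'
    intro x hx
    obtain ⟨r, θ, hr, rfl⟩ := exists_polar x hx
    rw [hu r hr θ, ha, hb]
    simp
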